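/- (Weak corrector equation for the limiting gradient.) Let Φ ∈ L²(Ω,ℙ;ℝ^d) be the limit in L²(Ω,ℙ;ℝ^d) of Dφ_μ as μ → 0⁺ (which exists). Then for every ψ ∈ L²(Ω,ℙ): E[Dψ · A(ξ + Φ)] = 0. -/

import Mathlib

open MeasureTheory

namespace StochHom

/-- Edges of `ℤ^d`, indexed by their base vertex and their direction:
the pair `(x, i)` represents the edge `(x, x + eᵢ)`. -/
abbrev Edge (d : ℕ) := (Fin d → ℤ) × Fin d

/-- Environments: conductance functions `ω : 𝔹 → ℝ` (with values in `[α,β]`). -/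
abbrev Env (d : ℕ) := Edge d → ℝ

/-- The coordinate unit vector `eᵢ` of `ℤ^d`. -/
def unit {d : ℕ} (i : Fin d) : Fin d → ℤ := Pi.single i 1

/-- The shift `θ_z` of the environment: `(θ_z ω)_{(x,y)} = ω_{(x+z,y+z)}`. -/
def shift {d : ℕ} (z : Fin d → ℤ) (ω : Env d) : Env d :=
  fun e => ω (e.1 + z, e.2)

/-- Forward difference `Dᵢψ(ω) = ψ(θ_{eᵢ}ω) − ψ(ω)`. -/
def Dgrad {d : ℕ} (ψ : Env d → ℝ) (i : Fin d) (ω : Env d) : ℝ :=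
  ψ (shift (unit i) ω) - ψ ω

/-- Backward difference `Dᵢ*ψ(ω) = ψ(ω) − ψ(θ_{−eᵢ}ω)`. -/
def DgradStar {d : ℕ} (ψ : Env d → ℝ) (i : Fin d) (ω : Env d) : ℝ :=
  ψ ω - ψ (shift (-unit i) ω)

/-- The operator `𝓛ψ(ω) = Σ_{z∼0} ω_{(0,z)} (ψ(ω) − ψ(θ_z ω))`, the sum running over the
`2d` nearest neighbors `z` of `0` in `ℤ^d`.  The conductance of the edge `(0, eᵢ)` is
`ω (0, i)` and that of the edge `(0, −eᵢ)` is `ω (−eᵢ, i)`. -/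
def genL {d : ℕ} (ψ : Env d → ℝ) (ω : Env d) : ℝ :=
  ∑ i : Fin d,
    (ω (0, i) * (ψ ω - ψ (shift (unit i) ω))
      + ω (-unit i, i) * (ψ ω - ψ (shift (-unit i) ω)))

/-- The local drift `𝔡(ω) = Σ_{z∼0} ω_{(0,z)} (ξ·z)` in the direction `ξ`. -/
def drift {d : ℕ} (ξ : Fin d → ℝ) (ω : Env d) : ℝ :=
  ∑ i : Fin d, (ω (0, i) * ξ i + ω (-unit i, i) * (-ξ i))

/-!
Testing the resolvent equation `μ φ_μ + 𝓛 φ_μ = 𝔡` against `ψ` and summing by parts, using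
stationarity (`𝓛 = -Σᵢ Dᵢ* ωᵢ Dᵢ`, `𝔡 = Σᵢ Dᵢ* ωᵢ ξᵢ`, and `-Dᵢ*` is the adjoint of `Dᵢ`), gives
`μ E[ψ φ_μ] + E[Dψ · A(ξ + Dφ_μ)] = 0`. For `ψ = φ_μ`, completing the square yields
`μ E[φ_μ²] ≤ Σᵢ E[ωᵢ] ξᵢ² / 4`, so `μ E[ψ φ_μ] = O(√μ)` by Cauchy–Schwarz, while
`E[Dψ · A(Dφ_μ - Φ)] → 0` since `Dφ_μ → Φ` in `L²`. Letting `μ → 0⁺` gives the claim.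
-/

open Filter Topology

section AbstractL2

variable {X : Type*} [MeasurableSpace X] {P : Measure X}

theorem abs_integral_mul_le_sqrt_mul_sqrt {f g : X → ℝ} (hf : MemLp f 2 P) (hg : MemLp g 2 P) :
    |∫ x, f x * g x ∂P| ≤ √(∫ x, f x ^ 2 ∂P) * √(∫ x, g x ^ 2 ∂P) := by
  have h2 : ENNReal.ofReal 2 = 2 := ENNReal.ofReal_ofNat 2
  have holder := integral_mul_norm_le_Lp_mul_Lq Real.HolderConjugate.two_two
    (h2 ▸ hf) (h2 ▸ hg)
  simp only [Real.norm_eq_abs, Real.rpow_two, sq_abs] at holder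
  calc |∫ x, f x * g x ∂P| ≤ ∫ x, |f x| * |g x| ∂P := by
        simpa only [abs_mul] using abs_integral_le_integral_abs (f := fun x => f x * g x)
    _ ≤ _ := holder
    _ = _ := by rw [Real.sqrt_eq_rpow, Real.sqrt_eq_rpow, one_div]

theorem tendsto_integral_mul_of_tendsto_integral_sq {ι : Type*} {l : Filter ι} {f : X → ℝ}
    {g : ι → X → ℝ} (hf : MemLp f 2 P) (hg : ∀ᶠ t in l, MemLp (g t) 2 P)
    (hlim : Tendsto (fun t => ∫ x, g t x ^ 2 ∂P) l (𝓝 0)) :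
    Tendsto (fun t => ∫ x, f x * g t x ∂P) l (𝓝 0) := by
  have hbound : Tendsto (fun t => √(∫ x, f x ^ 2 ∂P) * √(∫ x, g t x ^ 2 ∂P)) l (𝓝 0) := by
    simpa using ((Real.continuous_sqrt.tendsto 0).comp hlim).const_mul _
  refine squeeze_zero_norm' ?_ hbound
  filter_upwards [hg] with t ht
  exact abs_integral_mul_le_sqrt_mul_sqrt hf ht

theorem tendsto_mul_integral_mul_of_mul_integral_sq_le {f : X → ℝ} {g : ℝ → X → ℝ} {C : ℝ}
    (hf : MemLp f 2 P) (hg : ∀ μ : ℝ, 0 < μ → MemLp (g μ) 2 P)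
    (hC : ∀ μ : ℝ, 0 < μ → μ * ∫ x, g μ x ^ 2 ∂P ≤ C) :
    Tendsto (fun μ => μ * ∫ x, f x * g μ x ∂P) (𝓝[>] 0) (𝓝 0) := by
  have hbound : Tendsto (fun μ => √μ * (√(∫ x, f x ^ 2 ∂P) * √C)) (𝓝[>] 0) (𝓝 0) := by
    simpa using ((Real.continuous_sqrt.tendsto 0).mono_left nhdsWithin_le_nhds).mul_const _
  refine squeeze_zero_norm' ?_ hbound
  filter_upwards [self_mem_nhdsWithin] with μ (hμ : 0 < μ)
  calc ‖μ * ∫ x, f x * g μ x ∂P‖ = μ * |∫ x, f x * g μ x ∂P| := by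
        rw [Real.norm_eq_abs, abs_mul, abs_of_pos hμ]
    _ ≤ μ * (√(∫ x, f x ^ 2 ∂P) * √(∫ x, g μ x ^ 2 ∂P)) := by
        gcongr
        exact abs_integral_mul_le_sqrt_mul_sqrt hf (hg μ hμ)
    _ = √μ * (√(∫ x, f x ^ 2 ∂P) * √(μ * ∫ x, g μ x ^ 2 ∂P)) := by
        rw [Real.sqrt_mul hμ.le]
        nth_rewrite 1 [← Real.mul_self_sqrt hμ.le]
        ring
    _ ≤ √μ * (√(∫ x, f x ^ 2 ∂P) * √C) := by gcongr; exact hC μ hμ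

end AbstractL2

section Shift

variable {d : ℕ}

theorem shift_shift (z w : Fin d → ℤ) (ω : Env d) : shift z (shift w ω) = shift (w + z) ω := by
  funext e
  simp only [shift, add_assoc, add_comm z w]

@[simp]
theorem shift_zero (ω : Env d) : shift 0 ω = ω := by
  funext e
  simp [shift]

@[simp]
theorem shift_neg_shift (z : Fin d → ℤ) (ω : Env d) : shift (-z) (shift z ω) = ω := by
  rw [shift_shift, add_neg_cancel, shift_zero]

@[simp]
theorem shift_shift_neg (z : Fin d → ℤ) (ω : Env d) : shift z (shift (-z) ω) = ω := by
  rw [shift_shift, neg_add_cancel, shift_zero]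

@[simp]
theorem shift_apply_zero (z : Fin d → ℤ) (ω : Env d) (i : Fin d) : shift z ω (0, i) = ω (z, i) := by
  simp [shift]

theorem measurable_shift (z : Fin d → ℤ) : Measurable (shift z : Env d → Env d) :=
  measurable_pi_lambda _ fun _ => measurable_pi_apply _

def shiftEquiv (z : Fin d → ℤ) : Env d ≃ᵐ Env d where
  toFun := shift z
  invFun := shift (-z)
  left_inv := shift_neg_shift z
  right_inv := shift_shift_neg z
  measurable_toFun := measurable_shift z
  measurable_invFun := measurable_shift (-z)

theorem genL_eq_neg_sum_dgradStar (f : Env d → ℝ) (ω : Env d) :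
    genL f ω = -∑ i, DgradStar (fun ω => ω (0, i) * Dgrad f i ω) i ω := by
  simp only [genL, DgradStar, Dgrad, shift_apply_zero, shift_shift_neg, ← Finset.sum_neg_distrib]
  refine Finset.sum_congr rfl fun i _ => ?_
  ring

theorem drift_eq_sum_dgradStar (ξ : Fin d → ℝ) (ω : Env d) :
    drift ξ ω = ∑ i, DgradStar (fun ω => ω (0, i) * ξ i) i ω := by
  simp only [drift, DgradStar, shift_apply_zero]
  refine Finset.sum_congr rfl fun i _ => ?_
  ring

end Shift

section Stationary

variable {d : ℕ} {P : Measure (Env d)}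

theorem memLp_top_apply_of_ae_mem_Icc {a b : ℝ} (h : ∀ᵐ ω ∂P, ∀ e, ω e ∈ Set.Icc a b)
    (e : Edge d) : MemLp (fun ω : Env d => ω e) ⊤ P :=
  memLp_top_of_bound (measurable_pi_apply e).aestronglyMeasurable (max |a| |b|)
    (h.mono fun _ hω => abs_le_max_abs_abs (hω e).1 (hω e).2)

theorem integral_comp_shift (hP : ∀ z : Fin d → ℤ, MeasurePreserving (shift z) P P)
    (z : Fin d → ℤ) (g : Env d → ℝ) : ∫ ω, g (shift z ω) ∂P = ∫ ω, g ω ∂P :=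
  (hP z).integral_comp (shiftEquiv z).measurableEmbedding g

theorem memLp_dgrad (hP : ∀ z : Fin d → ℤ, MeasurePreserving (shift z) P P) {p : ENNReal}
    {f : Env d → ℝ} (hf : MemLp f p P) (i : Fin d) : MemLp (Dgrad f i) p P :=
  (hf.comp_measurePreserving (hP _)).sub hf

theorem memLp_dgradStar (hP : ∀ z : Fin d → ℤ, MeasurePreserving (shift z) P P) {p : ENNReal}
    {f : Env d → ℝ} (hf : MemLp f p P) (i : Fin d) : MemLp (DgradStar f i) p P :=
  hf.sub (hf.comp_measurePreserving (hP _))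

theorem integral_mul_dgradStar (hP : ∀ z : Fin d → ℤ, MeasurePreserving (shift z) P P)
    {g h : Env d → ℝ} (hg : MemLp g 2 P) (hh : MemLp h 2 P) (i : Fin d) :
    ∫ ω, g ω * DgradStar h i ω ∂P = -∫ ω, Dgrad g i ω * h ω ∂P := by
  have hgθ : MemLp (fun ω => g (shift (unit i) ω)) 2 P := hg.comp_measurePreserving (hP _)
  have hhθ : MemLp (fun ω => h (shift (-unit i) ω)) 2 P := hh.comp_measurePreserving (hP _)
  have hθ := integral_comp_shift hP (unit i) fun ω => g ω * h (shift (-unit i) ω)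
  simp only [shift_neg_shift] at hθ
  simp only [DgradStar, Dgrad, mul_sub, sub_mul]
  rw [integral_sub, integral_sub, ← hθ]
  · ring
  exacts [hgθ.integrable_mul hh, hg.integrable_mul hh, hg.integrable_mul hh,
    hg.integrable_mul hhθ]

/-- The pairing `E[Dψ · A F]`. -/
noncomputable def fluxPairing (P : Measure (Env d)) (ψ : Env d → ℝ) (F : Fin d → Env d → ℝ) : ℝ :=
  ∑ i, ∫ ω, ω (0, i) * (Dgrad ψ i ω * F i ω) ∂P

theorem integrable_conductance_mul_dgrad_mul
    (hP : ∀ z : Fin d → ℤ, MeasurePreserving (shift z) P P)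
    (hω : ∀ e : Edge d, MemLp (fun ω : Env d => ω e) ⊤ P) {ψ h : Env d → ℝ}
    (hψ : MemLp ψ 2 P) (hh : MemLp h 2 P) (i : Fin d) :
    Integrable (fun ω => ω (0, i) * (Dgrad ψ i ω * h ω)) P :=
  ((memLp_dgrad hP hψ i).integrable_mul hh).mul_of_top_right (hω _)

theorem fluxPairing_add (hP : ∀ z : Fin d → ℤ, MeasurePreserving (shift z) P P)
    (hω : ∀ e : Edge d, MemLp (fun ω : Env d => ω e) ⊤ P) {ψ : Env d → ℝ}
    {F G : Fin d → Env d → ℝ} (hψ : MemLp ψ 2 P) (hF : ∀ i, MemLp (F i) 2 P)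
    (hG : ∀ i, MemLp (G i) 2 P) :
    fluxPairing P ψ (F + G) = fluxPairing P ψ F + fluxPairing P ψ G := by
  simp only [fluxPairing, ← Finset.sum_add_distrib]
  refine Finset.sum_congr rfl fun i _ => ?_
  rw [← integral_add (integrable_conductance_mul_dgrad_mul hP hω hψ (hF i) i)
    (integrable_conductance_mul_dgrad_mul hP hω hψ (hG i) i)]
  exact integral_congr_ae (.of_forall fun ω => by simp only [Pi.add_apply]; ring)

theorem fluxPairing_sub (hP : ∀ z : Fin d → ℤ, MeasurePreserving (shift z) P P)
    (hω : ∀ e : Edge d, MemLp (fun ω : Env d => ω e) ⊤ P) {ψ : Env d → ℝ}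
    {F G : Fin d → Env d → ℝ} (hψ : MemLp ψ 2 P) (hF : ∀ i, MemLp (F i) 2 P)
    (hG : ∀ i, MemLp (G i) 2 P) :
    fluxPairing P ψ (F - G) = fluxPairing P ψ F - fluxPairing P ψ G := by
  simp only [fluxPairing, ← Finset.sum_sub_distrib]
  refine Finset.sum_congr rfl fun i _ => ?_
  rw [← integral_sub (integrable_conductance_mul_dgrad_mul hP hω hψ (hF i) i)
    (integrable_conductance_mul_dgrad_mul hP hω hψ (hG i) i)]
  exact integral_congr_ae (.of_forall fun ω => by simp only [Pi.sub_apply]; ring)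

theorem tendsto_fluxPairing_of_tendsto_integral_sum_sq
    (hP : ∀ z : Fin d → ℤ, MeasurePreserving (shift z) P P)
    (hω : ∀ e : Edge d, MemLp (fun ω : Env d => ω e) ⊤ P) {ψ : Env d → ℝ} (hψ : MemLp ψ 2 P)
    {ι : Type*} {l : Filter ι} {G : ι → Fin d → Env d → ℝ}
    (hG : ∀ᶠ t in l, ∀ i, MemLp (G t i) 2 P)
    (hlim : Tendsto (fun t => ∫ ω, ∑ i, G t i ω ^ 2 ∂P) l (𝓝 0)) :
    Tendsto (fun t => fluxPairing P ψ (G t)) l (𝓝 0) := by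
  have hterm (i : Fin d) :
      Tendsto (fun t => ∫ ω, ω (0, i) * (Dgrad ψ i ω * G t i ω) ∂P) l (𝓝 0) := by
    have hsq : Tendsto (fun t => ∫ ω, G t i ω ^ 2 ∂P) l (𝓝 0) := by
      refine squeeze_zero' (.of_forall fun t => integral_nonneg fun ω => sq_nonneg _) ?_ hlim
      filter_upwards [hG] with t ht
      refine integral_mono (ht i).integrable_sq
        (integrable_finsetSum _ fun j _ => (ht j).integrable_sq) fun ω => ?_
      exact Finset.single_le_sum (f := fun j => G t j ω ^ 2) (fun j _ => sq_nonneg _)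
        (Finset.mem_univ i)
    simpa only [mul_assoc] using tendsto_integral_mul_of_tendsto_integral_sq
      ((memLp_dgrad hP hψ i).mul' (hω (0, i))) (hG.mono fun t ht => ht i) hsq
  simpa [fluxPairing] using tendsto_finsetSum Finset.univ fun i _ => hterm i

theorem integral_mul_genL (hP : ∀ z : Fin d → ℤ, MeasurePreserving (shift z) P P)
    (hω : ∀ e : Edge d, MemLp (fun ω : Env d => ω e) ⊤ P) {f g : Env d → ℝ}
    (hf : MemLp f 2 P) (hg : MemLp g 2 P) :
    ∫ ω, g ω * genL f ω ∂P = fluxPairing P g (Dgrad f) := by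
  have hflux (i : Fin d) : MemLp (fun ω => ω (0, i) * Dgrad f i ω) 2 P :=
    (memLp_dgrad hP hf i).mul' (hω _)
  simp_rw [genL_eq_neg_sum_dgradStar, mul_neg, Finset.mul_sum]
  rw [integral_neg, integral_finsetSum _ fun i _ => ?_]
  · simp only [integral_mul_dgradStar hP hg (hflux _), Finset.sum_neg_distrib, neg_neg]
    refine Finset.sum_congr rfl fun i _ => integral_congr_ae (.of_forall fun ω => ?_)
    ring
  exact hg.integrable_mul (memLp_dgradStar hP (hflux i) i)

theorem memLp_genL (hP : ∀ z : Fin d → ℤ, MeasurePreserving (shift z) P P)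
    (hω : ∀ e : Edge d, MemLp (fun ω : Env d => ω e) ⊤ P) {f : Env d → ℝ} (hf : MemLp f 2 P) :
    MemLp (genL f) 2 P := by
  have hgenL : genL f = -∑ i, DgradStar (fun ω => ω (0, i) * Dgrad f i ω) i := by
    funext ω
    simp [genL_eq_neg_sum_dgradStar]
  rw [hgenL]
  exact (memLp_finsetSum' _ fun i _ =>
    memLp_dgradStar hP ((memLp_dgrad hP hf i).mul' (hω _)) i).neg

theorem integral_mul_drift [IsFiniteMeasure P]
    (hP : ∀ z : Fin d → ℤ, MeasurePreserving (shift z) P P)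
    (hω : ∀ e : Edge d, MemLp (fun ω : Env d => ω e) ⊤ P) {g : Env d → ℝ} (hg : MemLp g 2 P)
    (ξ : Fin d → ℝ) :
    ∫ ω, g ω * drift ξ ω ∂P = -fluxPairing P g (fun i _ => ξ i) := by
  have hflux (i : Fin d) : MemLp (fun ω => ω (0, i) * ξ i) 2 P :=
    (memLp_const (p := 2) (ξ i)).mul' (hω _)
  simp_rw [drift_eq_sum_dgradStar, Finset.mul_sum]
  rw [integral_finsetSum _ fun i _ => ?_]
  · simp only [integral_mul_dgradStar hP hg (hflux _), Finset.sum_neg_distrib]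
    refine congrArg _ (Finset.sum_congr rfl fun i _ => integral_congr_ae (.of_forall fun ω => ?_))
    ring
  exact hg.integrable_mul (memLp_dgradStar hP (hflux i) i)

end Stationary

section Corrector

variable {d : ℕ} {P : Measure (Env d)} [IsFiniteMeasure P]

theorem mul_integral_add_fluxPairing_eq_zero
    (hP : ∀ z : Fin d → ℤ, MeasurePreserving (shift z) P P)
    (hω : ∀ e : Edge d, MemLp (fun ω : Env d => ω e) ⊤ P) {ξ : Fin d → ℝ} {μ : ℝ}
    {f ψ : Env d → ℝ} (hf : MemLp f 2 P) (hψ : MemLp ψ 2 P)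
    (heq : ∀ᵐ ω ∂P, μ * f ω + genL f ω = drift ξ ω) :
    μ * ∫ ω, ψ ω * f ω ∂P + fluxPairing P ψ ((fun i _ => ξ i) + Dgrad f) = 0 := by
  have htested : μ * ∫ ω, ψ ω * f ω ∂P + ∫ ω, ψ ω * genL f ω ∂P
      = ∫ ω, ψ ω * drift ξ ω ∂P := by
    rw [← integral_const_mul, ← integral_add]
    · exact integral_congr_ae (heq.mono fun ω h => by beta_reduce; rw [← h]; ring)
    exacts [(hψ.integrable_mul hf).const_mul μ, hψ.integrable_mul (memLp_genL hP hω hf)]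
  rw [integral_mul_genL hP hω hf hψ, integral_mul_drift hP hω hψ] at htested
  rw [fluxPairing_add hP hω hψ (fun _ => memLp_const _) (memLp_dgrad hP hf)]
  linarith

theorem mul_integral_sq_le (hP : ∀ z : Fin d → ℤ, MeasurePreserving (shift z) P P)
    (hω : ∀ e : Edge d, MemLp (fun ω : Env d => ω e) ⊤ P) (hpos : ∀ᵐ ω ∂P, ∀ e, 0 ≤ ω e)
    {ξ : Fin d → ℝ} {μ : ℝ} {f : Env d → ℝ} (hf : MemLp f 2 P)
    (heq : ∀ᵐ ω ∂P, μ * f ω + genL f ω = drift ξ ω) :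
    μ * ∫ ω, f ω ^ 2 ∂P ≤ ∑ i, ∫ ω, ω (0, i) * (ξ i ^ 2 / 4) ∂P := by
  have hid := mul_integral_add_fluxPairing_eq_zero hP hω hf hf heq
  simp only [← sq] at hid
  rw [eq_neg_of_add_eq_zero_left hid, fluxPairing, ← Finset.sum_neg_distrib]
  refine Finset.sum_le_sum fun i _ => ?_
  rw [← integral_neg]
  have hint := integrable_conductance_mul_dgrad_mul hP hω hf
    ((memLp_const (ξ i)).add (memLp_dgrad hP hf i)) i
  refine integral_mono_ae hint.neg (((hω _).integrable le_top).mul_const _) ?_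
  filter_upwards [hpos] with ω hωpos
  simp only [Pi.add_apply]
  -- `-ω x (ξ + x) = ω ξ² / 4 - ω (x + ξ / 2)²`
  linear_combination mul_nonneg (hωpos (0, i)) (sq_nonneg (Dgrad f i ω + ξ i / 2))

theorem fluxPairing_const_add_eq_of_resolvent
    (hP : ∀ z : Fin d → ℤ, MeasurePreserving (shift z) P P)
    (hω : ∀ e : Edge d, MemLp (fun ω : Env d => ω e) ⊤ P) {ξ : Fin d → ℝ} {μ : ℝ}
    {f ψ : Env d → ℝ} {Φ : Fin d → Env d → ℝ} (hf : MemLp f 2 P) (hψ : MemLp ψ 2 P)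
    (hΦ : ∀ i, MemLp (Φ i) 2 P) (heq : ∀ᵐ ω ∂P, μ * f ω + genL f ω = drift ξ ω) :
    fluxPairing P ψ ((fun i _ => ξ i) + Φ)
      = -(μ * ∫ ω, ψ ω * f ω ∂P) - fluxPairing P ψ (Dgrad f - Φ) := by
  have hDf := memLp_dgrad hP hf
  have hsplit : (fun i _ => ξ i) + Φ = ((fun i _ => ξ i) + Dgrad f) - (Dgrad f - Φ) := by
    abel
  rw [hsplit, fluxPairing_sub (F := (fun i _ => ξ i) + Dgrad f) (G := Dgrad f - Φ) hP hω hψ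
    (fun i => (memLp_const (ξ i)).add (hDf i)) (fun i => (hDf i).sub (hΦ i))]
  linarith [mul_integral_add_fluxPairing_eq_zero hP hω hf hψ heq]

end Corrector

theorem statement8_general {d : ℕ} {α β : ℝ} (hα : 0 < α)
    (P : Measure (Env d)) [IsProbabilityMeasure P]
    (hsupp : ∀ᵐ ω ∂P, ∀ e, ω e ∈ Set.Icc α β)
    (hshift : ∀ z : Fin d → ℤ, MeasurePreserving (shift z) P P)
    (ξ : Fin d → ℝ) (φ : ℝ → Env d → ℝ)
    (hφ : ∀ μ : ℝ, 0 < μ → MemLp (φ μ) 2 P ∧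
      (∀ᵐ ω ∂P, μ * φ μ ω + genL (φ μ) ω = drift ξ ω))
    (Φ : Fin d → Env d → ℝ) (hΦ : ∀ i, MemLp (Φ i) 2 P)
    (hlim : Filter.Tendsto
      (fun μ : ℝ => ∫ ω, ∑ i : Fin d, (Dgrad (φ μ) i ω - Φ i ω) ^ 2 ∂P)
      (nhdsWithin 0 (Set.Ioi 0)) (nhds 0)) :
    ∀ ψ : Env d → ℝ, MemLp ψ 2 P →
      ∫ ω, ∑ i : Fin d, ω (0, i) * (Dgrad ψ i ω * (ξ i + Φ i ω)) ∂P = 0 := by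
  intro ψ hψ
  have hω := memLp_top_apply_of_ae_mem_Icc hsupp
  have hpos : ∀ᵐ ω ∂P, ∀ e, 0 ≤ ω e := hsupp.mono fun ω h e => hα.le.trans (h e).1
  have hmass := tendsto_mul_integral_mul_of_mul_integral_sq_le hψ (fun μ hμ => (hφ μ hμ).1)
    fun μ hμ => mul_integral_sq_le hshift hω hpos (hφ μ hμ).1 (hφ μ hμ).2
  have herr := tendsto_fluxPairing_of_tendsto_integral_sum_sq hshift hω hψ
    (eventually_nhdsWithin_of_forall fun μ (hμ : μ ∈ Set.Ioi 0) i =>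
      (memLp_dgrad hshift (hφ μ hμ).1 i).sub (hΦ i)) hlim
  have hpairing := (hmass.neg.sub herr).congr' <| eventually_nhdsWithin_of_forall
    fun μ (hμ : μ ∈ Set.Ioi 0) =>
      (fluxPairing_const_add_eq_of_resolvent hshift hω (hφ μ hμ).1 hψ hΦ (hφ μ hμ).2).symm
  rw [neg_zero, sub_zero] at hpairing
  rw [integral_finsetSum _ fun i _ => ?_]
  · exact tendsto_nhds_unique tendsto_const_nhds hpairing
  exact integrable_conductance_mul_dgrad_mul hshift hω hψ ((memLp_const (ξ i)).add (hΦ i)) i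

/-- weak corrector equation for the limiting gradient: if `Φ` is the
L²-limit of `Dφ_μ` as `μ → 0⁺`, then for every `ψ ∈ L²(Ω,ℙ)`,
`E[Dψ · A(ξ + Φ)] = 0`. -/
theorem statement8 {d : ℕ} (hd : 1 ≤ d) {α β : ℝ} (hα : 0 < α) (hαβ : α ≤ β)
    (P : Measure (Env d)) [IsProbabilityMeasure P]
    (hsupp : ∀ᵐ ω ∂P, ∀ e, ω e ∈ Set.Icc α β)
    (hshift : ∀ z : Fin d → ℤ, MeasurePreserving (shift z) P P)
    (ξ : Fin d → ℝ) (φ : ℝ → Env d → ℝ)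
    (hφ : ∀ μ : ℝ, 0 < μ → MemLp (φ μ) 2 P ∧
      (∀ᵐ ω ∂P, μ * φ μ ω + genL (φ μ) ω = drift ξ ω))
    (Φ : Fin d → Env d → ℝ) (hΦ : ∀ i, MemLp (Φ i) 2 P)
    (hlim : Filter.Tendsto
      (fun μ : ℝ => ∫ ω, ∑ i : Fin d, (Dgrad (φ μ) i ω - Φ i ω) ^ 2 ∂P)
      (nhdsWithin 0 (Set.Ioi 0)) (nhds 0)) :
    ∀ ψ : Env d → ℝ, MemLp ψ 2 P →
      ∫ ω, ∑ i : Fin d, ω (0, i) * (Dgrad ψ i ω * (ξ i + Φ i ω)) ∂P = 0 :=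
  statement8_general hα P hsupp hshift ξ φ hφ Φ hΦ hlim

end StochHom
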